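/- Let a be a non-constant binary sequence of period n ≥ 2. Then for any 1 ≤ t ≤ n-1 and any 1 ≤ τ ≤ n-1, the arithmetic autocorrelation satisfies A_a(τ) = A_{a^{(t)}}(τ); i.e., the arithmetic autocorrelation at a fixed shift τ is invariant under cyclic shifts of the sequence. -/

import Mathlib

/-! Let `M = 2 ^ n - 1`. Doubling modulo `M` rotates the `n`-bit expansion of a least residue, so
it preserves `w2` of that residue; and for a sequence of period `n`,
`σ(a) ≡ 2 ^ t σ(a^(t)) (mod M)`. If `σ(a) < σ(a^(τ))` the complement identity
`w2 x + w2 (M - x) = n` turns `A_a(τ)` into `2 w2 r - n`, as in the other case, where `r` is the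
least residue of `σ(a) - σ(a^(τ))` mod `M`. Passing from `a` to `a^(t)` multiplies `r` by
`2 ^ (-t)`, which does not change `w2 r`. -/

def w2 (a : ℕ) : ℕ := (Nat.digits 2 a).sum

def sigma (n : ℕ) (a : ℕ → ℕ) : ℕ := ∑ l ∈ Finset.range n, a l * 2 ^ l

/-- arithmetic autocorrelation of the sequence `a` at shift `τ` -/
def arithAC (n : ℕ) (a : ℕ → ℕ) (τ : ℕ) : ℤ :=
  if sigma n a > sigma n (fun l => a (l + τ)) then
    2 * w2 (sigma n a - sigma n (fun l => a (l + τ))) - (n : ℤ)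
  else
    (n : ℤ) - 2 * w2 (sigma n (fun l => a (l + τ)) - sigma n a)

lemma w2_add_two_mul {r : ℕ} (hr : r < 2) (y : ℕ) : w2 (r + 2 * y) = r + w2 y := by
  rcases Nat.eq_zero_or_pos (r + y) with h | h
  · simp [show r = 0 by omega, show y = 0 by omega, w2]
  · simp only [w2, Nat.digits_add 2 one_lt_two r y hr (by omega), List.sum_cons]

lemma w2_add_two_pow_mul {k r : ℕ} (hr : r < 2 ^ k) (y : ℕ) :
    w2 (r + 2 ^ k * y) = w2 r + w2 y := by
  induction k generalizing r with
  | zero => simp [show r = 0 by omega, w2]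
  | succ k ih =>
    have hr' : r / 2 < 2 ^ k := by rw [pow_succ] at hr; omega
    have hsplit : r = r % 2 + 2 * (r / 2) := (Nat.mod_add_div r 2).symm
    rw [hsplit, add_assoc, pow_succ', mul_assoc, ← mul_add, w2_add_two_mul (Nat.mod_lt _ two_pos),
      w2_add_two_mul (Nat.mod_lt _ two_pos), ih hr', add_assoc]

lemma w2_add_w2_two_pow_sub_one_sub {n x : ℕ} (hx : x ≤ 2 ^ n - 1) :
    w2 x + w2 (2 ^ n - 1 - x) = n := by
  induction n generalizing x with
  | zero => simp [show x = 0 by simpa using hx, w2]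
  | succ n ih =>
    have hpow : 2 ^ (n + 1) = 2 * 2 ^ n := pow_succ' 2 n
    have hone : 1 ≤ 2 ^ n := Nat.one_le_two_pow
    have hcompl : 2 ^ (n + 1) - 1 - x = (1 - x % 2) + 2 * (2 ^ n - 1 - x / 2) := by omega
    rw [hcompl, ← Nat.mod_add_div x 2, w2_add_two_mul (Nat.mod_lt _ two_pos),
      w2_add_two_mul (by omega), Nat.mod_add_div x 2]
    have := ih (x := x / 2) (by omega)
    omega

lemma w2_two_mul_mod_two_pow_sub_one {n x : ℕ} (hx : x < 2 ^ n - 1) :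
    w2 (2 * x % (2 ^ n - 1)) = w2 x := by
  rcases n with _ | n
  · simp at hx
  · have hpow : 2 ^ (n + 1) = 2 * 2 ^ n := pow_succ' 2 n
    obtain ⟨r, b, hr, hb, rfl⟩ : ∃ r b, r < 2 ^ n ∧ b < 2 ∧ x = r + 2 ^ n * b :=
      ⟨x % 2 ^ n, x / 2 ^ n, Nat.mod_lt _ (by positivity), by
        rw [Nat.div_lt_iff_lt_mul (by positivity)]; omega, (Nat.mod_add_div x _).symm⟩
    have hrot : 2 * (r + 2 ^ n * b) = (b + 2 * r) + (2 ^ (n + 1) - 1) * b := by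
      interval_cases b <;> omega
    have hb' : w2 b = b := by interval_cases b <;> rfl
    rw [hrot, Nat.add_mul_mod_self_left, Nat.mod_eq_of_lt (by interval_cases b <;> omega),
      w2_add_two_mul hb, w2_add_two_pow_mul hr, hb', add_comm]

lemma w2_val_two_pow_mul {n : ℕ} [NeZero (2 ^ n - 1)] (t : ℕ) (x : ZMod (2 ^ n - 1)) :
    w2 (2 ^ t * x).val = w2 x.val := by
  induction t with
  | zero => rw [pow_zero, one_mul]
  | succ t ih =>
    rw [pow_succ', mul_assoc, ZMod.val_mul, ZMod.val_two_eq_two_mod, Nat.mod_mul_mod,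
      w2_two_mul_mod_two_pow_sub_one (ZMod.val_lt _), ih]

lemma sigma_succ (n : ℕ) (b : ℕ → ℕ) : sigma (n + 1) b = sigma n b + b n * 2 ^ n :=
  Finset.sum_range_succ _ _

lemma sigma_succ' (n : ℕ) (b : ℕ → ℕ) :
    sigma (n + 1) b = b 0 + 2 * sigma n (fun l => b (l + 1)) := by
  rw [sigma, Finset.sum_range_succ', sigma, Finset.mul_sum, add_comm]
  simp only [pow_succ, pow_zero, mul_one]
  congr 1
  exact Finset.sum_congr rfl fun l _ => by ring

lemma ZMod.two_pow_eq_one (n : ℕ) : (2 : ZMod (2 ^ n - 1)) ^ n = 1 := by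
  have h := ZMod.natCast_self (2 ^ n - 1)
  rw [Nat.cast_sub Nat.one_le_two_pow] at h
  push_cast at h
  exact sub_eq_zero.mp h

lemma cast_sigma_eq_two_mul {n : ℕ} {b : ℕ → ℕ} (hb : b n = b 0) :
    (sigma n b : ZMod (2 ^ n - 1)) = 2 * sigma n (fun l => b (l + 1)) := by
  have h : ((sigma n b + b n * 2 ^ n : ℕ) : ZMod (2 ^ n - 1)) =
      ((b 0 + 2 * sigma n (fun l => b (l + 1)) : ℕ) : ZMod (2 ^ n - 1)) := by
    rw [← sigma_succ, sigma_succ']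
  push_cast at h
  rw [hb, ZMod.two_pow_eq_one, mul_one, add_comm] at h
  exact add_left_cancel h

lemma cast_sigma_eq_two_pow_mul {n : ℕ} {b : ℕ → ℕ} (hb : Function.Periodic b n) (t : ℕ) :
    (sigma n b : ZMod (2 ^ n - 1)) = 2 ^ t * sigma n (fun l => b (l + t)) := by
  induction t with
  | zero => simp
  | succ t ih =>
    rw [ih, cast_sigma_eq_two_mul (hb.add_const t).eq, pow_succ, mul_assoc]
    simp only [add_right_comm _ 1 t, add_assoc]

lemma sigma_lt_two_pow_sub_one {n : ℕ} {b : ℕ → ℕ} (hb : ∀ l, b l ≤ 1) (h : ∃ l < n, b l ≠ 1) :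
    sigma n b < 2 ^ n - 1 := by
  obtain ⟨l, hl, hbl⟩ := h
  calc sigma n b < ∑ k ∈ Finset.range n, 2 ^ k := by
        refine Finset.sum_lt_sum (fun k _ => ?_) ⟨l, Finset.mem_range.mpr hl, ?_⟩
        · exact (Nat.mul_le_mul_right _ (hb k)).trans_eq (one_mul _)
        · simp [show b l = 0 by have := hb l; omega]
    _ = 2 ^ n - 1 := by simpa using Nat.geomSum_eq le_rfl n

lemma eq_of_sigma_eq {n : ℕ} {b c : ℕ → ℕ} (hb : ∀ l, b l ≤ 1) (hc : ∀ l, c l ≤ 1)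
    (h : sigma n b = sigma n c) : ∀ l < n, b l = c l := by
  induction n generalizing b c with
  | zero => intro l hl; omega
  | succ n ih =>
    rw [sigma_succ', sigma_succ'] at h
    have h0 : b 0 = c 0 := by have := hb 0; have := hc 0; omega
    have htail := ih (fun l => hb (l + 1)) (fun l => hc (l + 1)) (by omega)
    rintro (_ | l) hl
    · exact h0
    · exact htail l (by omega)

lemma Function.Periodic.exists_lt_add {n : ℕ} {p : ℕ → Prop} (hp : Function.Periodic p n)
    (h : ∃ l < n, p l) (s : ℕ) : ∃ l < n, p (l + s) := by
  obtain ⟨l, hl, hpl⟩ := h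
  refine ⟨(l + n * s - s) % n, Nat.mod_lt _ (by omega), ?_⟩
  rw [(hp.add_const s).map_mod_nat, Nat.sub_add_cancel (by nlinarith), mul_comm]
  exact (hp.nat_mul s l).mpr hpl

lemma sigma_ne_sigma_shift {n τ : ℕ} {b : ℕ → ℕ} (hb : ∀ l, b l ≤ 1)
    (h : ∃ l < n, b (l + τ) ≠ b l) : sigma n b ≠ sigma n (fun l => b (l + τ)) := fun hσ => by
  obtain ⟨l, hl, hbl⟩ := h
  exact hbl (eq_of_sigma_eq hb (fun _ => hb _) hσ l hl).symm

lemma arithAC_eq_w2_val {n : ℕ} (b : ℕ → ℕ) (τ : ℕ) (hb : sigma n b < 2 ^ n - 1)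
    (hbτ : sigma n (fun l => b (l + τ)) < 2 ^ n - 1)
    (hne : sigma n b ≠ sigma n (fun l => b (l + τ))) :
    arithAC n b τ =
      2 * w2 ((sigma n b : ZMod (2 ^ n - 1)) - sigma n (fun l => b (l + τ))).val - n := by
  unfold arithAC
  set x := sigma n b
  set y := sigma n (fun l => b (l + τ))
  split_ifs with hxy
  · rw [← Nat.cast_sub hxy.le, ZMod.val_natCast_of_lt (by omega)]
  · have hcompl :
        (x : ZMod (2 ^ n - 1)) - y = ((2 ^ n - 1 - (y - x) : ℕ) : ZMod (2 ^ n - 1)) := by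
      rw [Nat.cast_sub (show y - x ≤ 2 ^ n - 1 by omega), Nat.cast_sub (show x ≤ y by omega),
        ZMod.natCast_self]
      ring
    rw [hcompl, ZMod.val_natCast_of_lt (by omega)]
    have := w2_add_w2_two_pow_sub_one_sub (n := n) (x := y - x) (by omega)
    omega

theorem arithAC_shift_invariant_general (n : ℕ) (a : ℕ → ℕ)
    (hbin : ∀ l, a l ≤ 1) (hper : ∀ l, a (l + n) = a l)
    (hno : ∃ l < n, a l ≠ 1)
    (t : ℕ) (τ : ℕ)
    (hne : ∃ l < n, a (l + τ) ≠ a l) :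
    arithAC n a τ = arithAC n (fun l => a (l + t)) τ := by
  have ha : Function.Periodic a n := hper
  have hlt (k : ℕ) : sigma n (fun l => a (l + k)) < 2 ^ n - 1 :=
    sigma_lt_two_pow_sub_one (fun _ => hbin _) ((ha.comp (· ≠ 1)).exists_lt_add hno k)
  have hneₜ : ∃ l < n, a (l + τ + t) ≠ a (l + t) := by
    have hp : Function.Periodic (fun l => a (l + τ) ≠ a l) n := fun l => by
      simp only [add_right_comm l n τ, ha _]
    simpa only [add_right_comm _ t τ] using hp.exists_lt_add hne t
  have : NeZero (2 ^ n - 1) := ⟨(hlt 0).ne_bot⟩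
  have hrot : (sigma n a : ZMod (2 ^ n - 1)) - (sigma n (fun l => a (l + τ)) : ℕ) =
      2 ^ t * ((sigma n (fun l => a (l + t)) : ZMod (2 ^ n - 1)) -
        (sigma n (fun l => a (l + τ + t)) : ℕ)) := by
    rw [mul_sub, ← cast_sigma_eq_two_pow_mul ha t, cast_sigma_eq_two_pow_mul (ha.add_const τ) t]
    simp only [add_right_comm _ t τ]
  rw [arithAC_eq_w2_val a τ (hlt 0) (hlt τ) (sigma_ne_sigma_shift hbin hne),
    arithAC_eq_w2_val _ τ (hlt t) (by simpa only [add_assoc] using hlt (τ + t))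
      (sigma_ne_sigma_shift (fun _ => hbin _) hneₜ), hrot, w2_val_two_pow_mul]

theorem arithAC_shift_invariant (n : ℕ) (hn : 2 ≤ n) (a : ℕ → ℕ)
    (hbin : ∀ l, a l ≤ 1) (hper : ∀ l, a (l + n) = a l)
    (hnz : ∃ l < n, a l ≠ 0) (hno : ∃ l < n, a l ≠ 1)
    (t : ℕ) (ht1 : 1 ≤ t) (ht2 : t ≤ n - 1)
    (τ : ℕ) (hτ1 : 1 ≤ τ) (hτ2 : τ ≤ n - 1)
    (hne : ∃ l < n, a (l + τ) ≠ a l) :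
    arithAC n a τ = arithAC n (fun l => a (l + t)) τ :=
  arithAC_shift_invariant_general n a hbin hper hno t τ hne
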